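/- Let G be a unicyclic graph on n vertices whose unique cycle has length l, and let x be a vertex lying on the cycle. Then R^w(x) = 2·R(x) − (n − l), where R^w(x) = Σ_{y∈V(G)} deg(y)·r(x,y) and R(x) = Σ_{y∈V(G)} r(x,y). -/

import Mathlib

/-!
Write `R^w(x) = ∑_y deg(y) r(x, y)` as the sum of `r(x, a)` over the ordered edges `(a, b)`.
The `2l` ordered edges of the cycle contribute `2 ∑_{y ∈ C} r(x, y)`. Every other edge `ab` is a
bridge, since deleting a non-bridge leaves a tree, which cannot contain the cycle. If `a` is the
endpoint that the bridge separates from `x`, the series law gives `r(x, a) = r(x, b) + 1`, so the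
two orientations of `ab` contribute `2 r(x, a) - 1`. Every vertex off the cycle is the far
endpoint of exactly one bridge (the last edge of a path from `x`), so the bridges contribute
`2 ∑_{y ∉ C} r(x, y) - (n - l)`.

The series law comes from the variational definition of `r`: the energy of a potential splits
along the bridge, and optimising over the value `t` at `b` of a potential that is `1` at `x` and
`0` at `a` leaves `min_t ((1 - t)² / r(x, b) + t²) = 1 / (r(x, b) + 1)`.
-/

open SimpleGraph Finset

attribute [local instance] Classical.propDecidable

variable {V : Type*}

/-- Degree of a vertex as a real number. -/
noncomputable def degR [Fintype V] (G : SimpleGraph V) (x : V) : ℝ :=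
  ((Finset.univ.filter fun y => G.Adj x y).card : ℝ)

/-- Number of edges of a graph. -/
noncomputable def esize (G : SimpleGraph V) : ℕ := Nat.card G.edgeSet

/-- Dirichlet energy of a potential. -/
noncomputable def energyFn [Fintype V] (G : SimpleGraph V) (φ : V → ℝ) : ℝ :=
  (1/2) * ∑ u, ∑ v, if G.Adj u v then (φ u - φ v)^2 else 0

/-- Effective resistance between two vertices (unit resistors on edges),
via the Dirichlet variational principle: the reciprocal of the minimal energy
of a potential with value 1 at `x` and 0 at `y`. -/
noncomputable def eres [Fintype V] (G : SimpleGraph V) (x y : V) : ℝ :=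
  (sInf {e : ℝ | ∃ φ : V → ℝ, φ x = 1 ∧ φ y = 0 ∧ e = energyFn G φ})⁻¹

/-- The transition matrix of the simple random walk, killed at `y`. -/
noncomputable def hitMat [Fintype V] (G : SimpleGraph V) (y : V) : Matrix V V ℝ :=
  Matrix.of fun u v => if v = y then 0 else if G.Adj u v then (degR G u)⁻¹ else 0

/-- Expected hitting time `H_{xy}` of the simple random walk from `x` to `y`,
expressed as the sum of the survival probabilities of the walk killed at `y`. -/
noncomputable def hitting [Fintype V] (G : SimpleGraph V) (x y : V) : ℝ :=
  if x = y then 0 else ∑' k : ℕ, ∑ z, (hitMat G y ^ k) x z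

/-- Resistance-centrality `R(x)`. -/
noncomputable def Rres [Fintype V] (G : SimpleGraph V) (x : V) : ℝ := ∑ y, eres G x y

/-- Weighted resistance-centrality `R^w(x)`. -/
noncomputable def Rw [Fintype V] (G : SimpleGraph V) (x : V) : ℝ :=
  ∑ y, degR G y * eres G x y

/-- Kirchhoff index `Kf(G)`. -/
noncomputable def Kf [Fintype V] (G : SimpleGraph V) : ℝ :=
  (1/2) * ∑ x, ∑ y, eres G x y

/-- Additive degree-Kirchhoff index `Kf⁺(G)`. -/
noncomputable def KfPlus [Fintype V] (G : SimpleGraph V) : ℝ :=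
  (1/2) * ∑ x, ∑ y, (degR G x + degR G y) * eres G x y

/-- Multiplicative degree-Kirchhoff index `Kf*(G)`. -/
noncomputable def KfStar [Fintype V] (G : SimpleGraph V) : ℝ :=
  (1/2) * ∑ x, ∑ y, degR G x * degR G y * eres G x y

/-- Cover cost `CC(x) = Σ_y H_{xy}`. -/
noncomputable def coverCost [Fintype V] (G : SimpleGraph V) (x : V) : ℝ :=
  ∑ y, hitting G x y

/-- Reverse cover cost `RC(x) = Σ_y H_{yx}`. -/
noncomputable def reverseCoverCost [Fintype V] (G : SimpleGraph V) (x : V) : ℝ :=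
  ∑ y, hitting G y x

/-- Centrality (transmission) `D(x) = Σ_y d(x,y)`. -/
noncomputable def Dcent [Fintype V] (G : SimpleGraph V) (x : V) : ℝ :=
  ∑ y, (G.dist x y : ℝ)

/-- Weighted centrality `D^w(x) = Σ_y deg(y)·d(x,y)`. -/
noncomputable def Dw [Fintype V] (G : SimpleGraph V) (x : V) : ℝ :=
  ∑ y, degR G y * (G.dist x y : ℝ)

/-- Wiener index `W(G)`. -/
noncomputable def Wiener [Fintype V] (G : SimpleGraph V) : ℝ :=
  (1/2) * ∑ x, ∑ y, (G.dist x y : ℝ)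

/-- `D_{T}(v)`: sum of distances from `v` to the vertices of its connected
component in `G'` (used for the branch trees of a unicyclic graph). -/
noncomputable def branchD [Fintype V] (G' : SimpleGraph V) (v : V) : ℝ :=
  ∑ u, if G'.Reachable v u then (G'.dist v u : ℝ) else 0

/-- The set of edges of the cycle `c 0 - c 1 - ⋯ - c (l-1) - c 0`. -/
def cycleEdges {l : ℕ} [NeZero l] (c : Fin l → V) : Set (Sym2 V) :=
  Set.range fun i : Fin l => s(c i, c (i + 1))

/-- Distance from a vertex to a set of vertices. -/
noncomputable def distToSet [Fintype V] (G : SimpleGraph V) (x : V) (s : Set V) : ℕ :=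
  sInf {d | ∃ y ∈ s, G.dist x y = d}

/-- `v` is the center of a star. -/
def IsStarCenter (G : SimpleGraph V) (v : V) : Prop := ∀ u, u ≠ v → G.Adj v u

/-- `G` is a star. -/
def IsStar (G : SimpleGraph V) : Prop := ∃ v, IsStarCenter G v

/-- The lollipop graph `P_n^l` : a cycle `C_l` on `0,…,l-1` together with a
path on `l,…,n-1` attached at the cycle vertex `0`. -/
def lollipop (n l : ℕ) : SimpleGraph (Fin n) :=
  SimpleGraph.fromRel (fun a b =>
    (a.val + 1 = b.val ∧ b.val < l) ∨ (a.val = 0 ∧ b.val = l - 1) ∨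
    (a.val = 0 ∧ b.val = l) ∨ (l ≤ a.val ∧ a.val + 1 = b.val))

/-- The graph `S_n^l` : a cycle `C_l` on `0,…,l-1` with `n - l` pendant
vertices `l,…,n-1` attached at the cycle vertex `0`. -/
def starCycle (n l : ℕ) : SimpleGraph (Fin n) :=
  SimpleGraph.fromRel (fun a b =>
    (a.val + 1 = b.val ∧ b.val < l) ∨ (a.val = 0 ∧ b.val = l - 1) ∨
    (a.val = 0 ∧ l ≤ b.val))

/-- The cycle graph `C_n` on `Fin n`. -/
def cycleG (n : ℕ) : SimpleGraph (Fin n) :=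
  SimpleGraph.fromRel (fun a b => a.val + 1 = b.val ∨ (a.val = 0 ∧ b.val = n - 1))

section Energy

variable [Fintype V] (G : SimpleGraph V)

theorem energyFn_nonneg (φ : V → ℝ) : 0 ≤ energyFn G φ := by
  refine mul_nonneg (by norm_num) (sum_nonneg fun u _ => sum_nonneg fun v _ => ?_)
  split_ifs <;> positivity

@[simp]
theorem energyFn_const (a : ℝ) : energyFn G (fun _ => a) = 0 := by
  simp [energyFn]

theorem energyFn_affine (a b : ℝ) (φ : V → ℝ) :
    energyFn G (fun w => a + b * φ w) = b ^ 2 * energyFn G φ := by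
  simp only [energyFn, mul_sum]
  refine sum_congr rfl fun u _ => sum_congr rfl fun w _ => ?_
  split_ifs <;> ring

theorem sq_sub_le_two_mul_energyFn {a b : V} (h : G.Adj a b) (φ : V → ℝ) :
    (φ a - φ b) ^ 2 ≤ 2 * energyFn G φ := by
  have hterm : ∀ u w, 0 ≤ (if G.Adj u w then (φ u - φ w) ^ 2 else 0) := fun u w => by
    split_ifs <;> positivity
  calc (φ a - φ b) ^ 2 = if G.Adj a b then (φ a - φ b) ^ 2 else 0 := (if_pos h).symm
    _ ≤ ∑ w, if G.Adj a w then (φ a - φ w) ^ 2 else 0 :=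
      single_le_sum (fun w _ => hterm a w) (mem_univ b)
    _ ≤ ∑ u, ∑ w, if G.Adj u w then (φ u - φ w) ^ 2 else 0 :=
      single_le_sum (f := fun u => ∑ w, _) (fun u _ => sum_nonneg fun w _ => hterm u w)
        (mem_univ a)
    _ = 2 * energyFn G φ := by rw [energyFn]; ring

theorem abs_sub_le_length_mul_sqrt_energyFn {x y : V} (p : G.Walk x y) (φ : V → ℝ) :
    |φ x - φ y| ≤ p.length * √(2 * energyFn G φ) := by
  induction p with
  | nil => simp
  | @cons a b y h q ih =>
    calc |φ a - φ y| ≤ |φ a - φ b| + |φ b - φ y| := abs_sub_le _ _ _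
      _ ≤ √(2 * energyFn G φ) + q.length * √(2 * energyFn G φ) :=
        add_le_add (Real.abs_le_sqrt (sq_sub_le_two_mul_energyFn G h φ)) ih
      _ = (q.cons h).length * √(2 * energyFn G φ) := by
        rw [Walk.length_cons]; push_cast; ring

def potentialEnergies (x y : V) : Set ℝ :=
  {e | ∃ φ : V → ℝ, φ x = 1 ∧ φ y = 0 ∧ e = energyFn G φ}

theorem eres_eq_inv_sInf (x y : V) : eres G x y = (sInf (potentialEnergies G x y))⁻¹ := rfl

theorem nonneg_of_mem_potentialEnergies {x y : V} {e : ℝ} (he : e ∈ potentialEnergies G x y) :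
    0 ≤ e := by
  obtain ⟨φ, -, -, rfl⟩ := he
  exact energyFn_nonneg G φ

theorem bddBelow_potentialEnergies (x y : V) : BddBelow (potentialEnergies G x y) :=
  ⟨0, fun _ => nonneg_of_mem_potentialEnergies G⟩

theorem potentialEnergies_nonempty {x y : V} (h : x ≠ y) : (potentialEnergies G x y).Nonempty :=
  ⟨_, fun w => if w = x then 1 else 0, by simp, by simp [h.symm], rfl⟩

@[simp]
theorem eres_self (x : V) : eres G x x = 0 := by
  have : potentialEnergies G x x = ∅ := by
    ext e
    simp only [potentialEnergies, Set.mem_ofPred_eq, Set.mem_empty_iff_false, iff_false]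
    rintro ⟨φ, h1, h0, -⟩
    simp [h1] at h0
  rw [eres_eq_inv_sInf, this, Real.sInf_empty, inv_zero]

theorem sInf_potentialEnergies_pos {x y : V} (h : G.Reachable x y) (hxy : x ≠ y) :
    0 < sInf (potentialEnergies G x y) := by
  obtain ⟨p⟩ := h
  have hlen : (0 : ℝ) < p.length := by
    exact_mod_cast Nat.pos_of_ne_zero fun h0 => hxy (Walk.eq_of_length_eq_zero h0)
  refine lt_of_lt_of_le (b := (2 * (p.length : ℝ) ^ 2)⁻¹) (by positivity)
    (le_csInf (potentialEnergies_nonempty G hxy) ?_)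
  rintro _ ⟨φ, hx, hy, rfl⟩
  have hbound := abs_sub_le_length_mul_sqrt_energyFn G p φ
  rw [hx, hy, sub_zero, abs_one] at hbound
  have hsq : 1 ≤ (p.length * √(2 * energyFn G φ)) ^ 2 := by nlinarith
  rw [mul_pow, Real.sq_sqrt (by linarith [energyFn_nonneg G φ])] at hsq
  rw [inv_le_iff_one_le_mul₀ (by positivity)]
  linarith

theorem sq_sub_le_eres_mul_energyFn {x y : V} (h : G.Reachable x y) (φ : V → ℝ) :
    (φ x - φ y) ^ 2 ≤ eres G x y * energyFn G φ := by
  rcases eq_or_ne x y with rfl | hxy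
  · simp
  have hC := sInf_potentialEnergies_pos G h hxy
  have hE := energyFn_nonneg G φ
  rcases eq_or_ne (φ x) (φ y) with hd | hd
  · rw [hd, sub_self, eres_eq_inv_sInf]
    simpa using mul_nonneg (inv_nonneg.mpr hC.le) hE
  have hd' : φ x - φ y ≠ 0 := sub_ne_zero.mpr hd
  have hψ : sInf (potentialEnergies G x y) ≤ (φ x - φ y)⁻¹ ^ 2 * energyFn G φ := by
    rw [← energyFn_affine G (-φ y / (φ x - φ y))]
    refine csInf_le (bddBelow_potentialEnergies G x y) ⟨_, ?_, ?_, rfl⟩ <;> field_simp <;> ring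
  rw [eres_eq_inv_sInf, inv_mul_eq_div, le_div_iff₀ hC]
  rw [inv_pow, inv_mul_eq_div, le_div_iff₀ (by positivity)] at hψ
  linarith

end Energy

section Cut

variable [Fintype V] (G : SimpleGraph V) {A : Set V} {u v : V}

theorem energyFn_eq_add_of_cut (huv : G.Adj u v) (hu : u ∉ A) (hv : v ∈ A)
    (hcut : ∀ a b, G.Adj a b → a ∈ A → b ∉ A → a = v ∧ b = u) (φ : V → ℝ) :
    energyFn G φ = energyFn G (A.piecewise φ fun _ => φ v)
      + energyFn G (A.piecewise (fun _ => φ u) φ) + (φ u - φ v) ^ 2 := by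
  have key : ∀ a b, (if G.Adj a b then (φ a - φ b) ^ 2 else 0) =
      (if G.Adj a b then (A.piecewise φ (fun _ => φ v) a - A.piecewise φ (fun _ => φ v) b) ^ 2
        else 0)
      + (if G.Adj a b then
          (A.piecewise (fun _ => φ u) φ a - A.piecewise (fun _ => φ u) φ b) ^ 2 else 0)
      + ((if a = u ∧ b = v then (φ u - φ v) ^ 2 else 0)
        + (if a = v ∧ b = u then (φ u - φ v) ^ 2 else 0)) := by
    intro a b
    by_cases hab : G.Adj a b
    · by_cases ha : a ∈ A <;> by_cases hb : b ∈ A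
      · have h1 : a ≠ u := fun h => hu (h ▸ ha)
        have h2 : b ≠ u := fun h => hu (h ▸ hb)
        simp [hab, ha, hb, h1, h2]
      · obtain ⟨rfl, rfl⟩ := hcut a b hab ha hb
        simp only [hab, ha, hb, huv.ne, ↓reduceIte, Set.piecewise_eq_of_mem,
          Set.piecewise_eq_of_notMem, not_false_eq_true, sub_self, ne_eq, OfNat.ofNat_ne_zero,
          zero_pow, and_false, and_self, zero_add]
        ring
      · obtain ⟨rfl, rfl⟩ := hcut b a hab.symm hb ha
        simp [hab, ha, hb, huv.ne]
      · have h1 : b ≠ v := fun h => hb (h ▸ hv)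
        have h2 : a ≠ v := fun h => ha (h ▸ hv)
        simp [hab, ha, hb, h1, h2]
    · have : ¬ (a = u ∧ b = v) ∧ ¬ (a = v ∧ b = u) := by
        constructor <;> rintro ⟨rfl, rfl⟩ <;> simp_all [G.adj_comm]
      simp [hab, this.1, this.2]
  simp only [energyFn, key, sum_add_distrib]
  simp only [ite_and, sum_ite_irrel, sum_ite_eq', mem_univ, ↓reduceIte, sum_const_zero]
  ring

end Cut

section SeriesLaw

variable [Fintype V] (G : SimpleGraph V) {A : Set V} {x u v : V}

theorem eres_nonneg (x y : V) : 0 ≤ eres G x y :=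
  inv_nonneg.mpr <| Real.sInf_nonneg fun _ => nonneg_of_mem_potentialEnergies G

/-- Cauchy–Schwarz for two resistors in series:
`1 = ((1 - t) + t)² ≤ (r + 1) ((1 - t)² / r + t²)`. -/
theorem one_le_add_sq_mul_add_one {r E t : ℝ} (hr : 0 ≤ r) (hE : 0 ≤ E)
    (h : (1 - t) ^ 2 ≤ r * E) : 1 ≤ (E + t ^ 2) * (r + 1) := by
  rcases hr.eq_or_lt with rfl | hr
  · nlinarith
  · have : 0 ≤ r * ((E + t ^ 2) * (r + 1) - 1) := by nlinarith [sq_nonneg (1 - t - r * t)]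
    nlinarith [(mul_nonneg_iff_of_pos_left hr).mp this]

theorem inv_eres_add_one_le_energyFn_of_cut (huv : G.Adj u v) (hu : u ∉ A) (hv : v ∈ A)
    (hx : x ∈ A) (hcut : ∀ a b, G.Adj a b → a ∈ A → b ∉ A → a = v ∧ b = u)
    (hxv : G.Reachable x v) {φ : V → ℝ} (hφx : φ x = 1) (hφu : φ u = 0) :
    (eres G x v + 1)⁻¹ ≤ energyFn G φ := by
  have hsplit := energyFn_eq_add_of_cut G huv hu hv hcut φ
  have hres := sq_sub_le_eres_mul_energyFn G hxv (A.piecewise φ fun _ => φ v)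
  rw [Set.piecewise_eq_of_mem _ _ _ hx, Set.piecewise_eq_of_mem _ _ _ hv, hφx] at hres
  have hbound := one_le_add_sq_mul_add_one (eres_nonneg G x v) (energyFn_nonneg G _) hres
  have hout := energyFn_nonneg G (A.piecewise (fun _ => φ u) φ)
  have hr := eres_nonneg G x v
  rw [hφu] at hsplit hout
  rw [inv_le_iff_one_le_mul₀ (by linarith)]
  calc 1 ≤ _ := hbound
    _ ≤ energyFn G φ * (eres G x v + 1) := by gcongr; linarith

theorem energyFn_piecewise_le_of_cut (huv : G.Adj u v) (hu : u ∉ A) (hv : v ∈ A)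
    (hcut : ∀ a b, G.Adj a b → a ∈ A → b ∉ A → a = v ∧ b = u) {φ : V → ℝ} (hφv : φ v = 0)
    (s : ℝ) :
    energyFn G (A.piecewise (fun w => 1 - s * (1 - φ w)) 0) ≤
      s ^ 2 * energyFn G φ + (1 - s) ^ 2 := by
  set ψ := A.piecewise (fun w => 1 - s * (1 - φ w)) 0
  have hin : (A.piecewise ψ fun _ => ψ v) =
      fun w => (1 - s) + s * A.piecewise φ (fun _ => φ v) w := by
    funext w
    by_cases hw : w ∈ A
    · simp only [ψ, hw, Set.piecewise_eq_of_mem]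
      ring
    · simp [ψ, hw, hv, hφv]
  have hout : A.piecewise (fun _ => ψ u) ψ = fun _ => 0 := by
    funext w
    by_cases hw : w ∈ A <;> simp [ψ, hw, hu]
  have hψ := energyFn_eq_add_of_cut G huv hu hv hcut ψ
  rw [hin, hout, energyFn_affine, energyFn_const] at hψ
  have hφ := energyFn_eq_add_of_cut G huv hu hv hcut φ
  have hψuv : ψ u - ψ v = -(1 - s) := by simp [ψ, hu, hv, hφv]
  rw [hψuv, neg_sq] at hψ
  nlinarith [energyFn_nonneg G (A.piecewise (fun _ => φ u) φ), sq_nonneg s]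

theorem sInf_potentialEnergies_le_of_cut (huv : G.Adj u v) (hu : u ∉ A) (hv : v ∈ A)
    (hx : x ∈ A) (hcut : ∀ a b, G.Adj a b → a ∈ A → b ∉ A → a = v ∧ b = u)
    (hxv : G.Reachable x v) :
    sInf (potentialEnergies G x u) ≤ (eres G x v + 1)⁻¹ := by
  set m := sInf (potentialEnergies G x u)
  have hwitness : ∀ {φ : V → ℝ}, φ v = 0 → ∀ s, 1 - s * (1 - φ x) = 1 →
      m ≤ s ^ 2 * energyFn G φ + (1 - s) ^ 2 := fun hφv s hψx =>
    (csInf_le (bddBelow_potentialEnergies G x u) ⟨_, by simp [hx, hψx], by simp [hu], rfl⟩)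
      |>.trans (energyFn_piecewise_le_of_cut G huv hu hv hcut hφv s)
  rcases eq_or_ne x v with rfl | hxv'
  · simpa using hwitness (φ := 0) rfl 0 (by simp)
  set C := sInf (potentialEnergies G x v)
  have hC : 0 < C := sInf_potentialEnergies_pos G hxv hxv'
  -- the witness for `e = E(φ)` is the optimal series combination `s = 1 / (e + 1)`
  have hm : ∀ e ∈ potentialEnergies G x v, m * (e + 1) ≤ e := by
    rintro _ ⟨φ, hφx, hφv, rfl⟩
    have hE := energyFn_nonneg G φ
    have := hwitness hφv (energyFn G φ + 1)⁻¹ (by simp [hφx])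
    rw [← le_div_iff₀ (by positivity)]
    refine this.trans_eq ?_
    field_simp
    ring
  obtain ⟨e₀, he₀⟩ := potentialEnergies_nonempty G hxv'
  have hm1 : m < 1 := by
    nlinarith [hm e₀ he₀, nonneg_of_mem_potentialEnergies G he₀]
  have hmC : m / (1 - m) ≤ C := le_csInf (potentialEnergies_nonempty G hxv') fun e he => by
    rw [div_le_iff₀ (by linarith)]
    linarith [hm e he]
  rw [div_le_iff₀ (by linarith)] at hmC
  rw [eres_eq_inv_sInf, show (C⁻¹ + 1)⁻¹ = C / (1 + C) by field_simp,
    le_div_iff₀ (by linarith)]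
  linarith

theorem eres_eq_eres_add_one_of_cut (huv : G.Adj u v) (hu : u ∉ A) (hv : v ∈ A)
    (hx : x ∈ A) (hcut : ∀ a b, G.Adj a b → a ∈ A → b ∉ A → a = v ∧ b = u)
    (hxv : G.Reachable x v) :
    eres G x u = eres G x v + 1 := by
  have hxu : x ≠ u := fun h => hu (h ▸ hx)
  have hlower : (eres G x v + 1)⁻¹ ≤ sInf (potentialEnergies G x u) :=
    le_csInf (potentialEnergies_nonempty G hxu) fun _ ⟨_, hφx, hφu, he⟩ =>
      he ▸ inv_eres_add_one_le_energyFn_of_cut G huv hu hv hx hcut hxv hφx hφu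
  rw [eres_eq_inv_sInf G x u,
    le_antisymm (sInf_potentialEnergies_le_of_cut G huv hu hv hx hcut hxv) hlower, inv_inv]

end SeriesLaw

section Bridges

variable {G : SimpleGraph V} {x a b : V}

theorem reachable_deleteEdges_of_isPath {w : V} {p : G.Walk x w} (hp : p.IsPath)
    (hb : b ∈ p.support) (hbw : w ≠ b) (z : V) :
    (G.deleteEdges {s(w, z)}).Reachable x b := by
  have hw := Walk.endpoint_notMem_support_takeUntil hp hb hbw
  refine ⟨(p.takeUntil b hb).toDeleteEdges {s(w, z)} fun e he hez => hw ?_⟩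
  rw [Set.mem_singleton_iff.mp hez] at he
  exact Walk.fst_mem_support_of_mem_edges _ he

theorem reachable_deleteEdges_or (hG : G.Preconnected) (h : G.Adj a b) (x : V) :
    (G.deleteEdges {s(a, b)}).Reachable x a ∨ (G.deleteEdges {s(a, b)}).Reachable x b := by
  obtain ⟨p, hp⟩ := (hG x a).exists_isPath
  by_cases he : s(a, b) ∈ p.edges
  · exact .inr (reachable_deleteEdges_of_isPath hp (p.snd_mem_support_of_mem_edges he) h.ne b)
  · exact .inl (reachable_deleteEdges_iff_exists_walk.mpr ⟨p, he⟩)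

/-- Each of the two edges lies on every path from `x` to `a`, so both are its last edge. -/
theorem eq_of_not_reachable_deleteEdges {b' : V} (hr : G.Reachable x a)
    (h : ¬ (G.deleteEdges {s(a, b)}).Reachable x a)
    (h' : ¬ (G.deleteEdges {s(a, b')}).Reachable x a) : b = b' := by
  obtain ⟨p, hp⟩ := hr.exists_isPath
  have hmem : ∀ {z}, ¬ (G.deleteEdges {s(a, z)}).Reachable x a → s(a, z) ∈ p.edges :=
    fun hz => by_contra fun he => hz (reachable_deleteEdges_iff_exists_walk.mpr ⟨p, he⟩)
  rw [hp.eq_penultimate_of_mem_edges (hmem h), hp.eq_penultimate_of_mem_edges (hmem h')]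

end Bridges

section Cycle

open Fin.NatCast Fin.CommRing

variable {l : ℕ} [NeZero l]

theorem Fin.add_natCast_ne_self {m : ℕ} (h0 : 0 < m) (hm : m < l) (i : Fin l) :
    i + (m : Fin l) ≠ i := by
  rw [Ne, add_eq_left, Fin.natCast_eq_zero]
  exact fun hdvd => absurd (Nat.le_of_dvd h0 hdvd) (by omega)

variable {H : SimpleGraph V} {c : Fin l → V}

theorem reachable_of_adj_succ_of_ne (k : Fin l) (h : ∀ i, i ≠ k → H.Adj (c i) (c (i + 1)))
    (i j : Fin l) : H.Reachable (c i) (c j) := by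
  have hchain : ∀ m : ℕ, m < l → H.Reachable (c (k + 1)) (c (k + 1 + m)) := by
    intro m
    induction m with
    | zero => simp
    | succ m ih =>
      intro hm
      have hne : k + 1 + (m : Fin l) ≠ k := by
        rw [add_assoc, ← Nat.cast_one, ← Nat.cast_add]
        exact Fin.add_natCast_ne_self (by omega) (by omega) k
      have := (ih (by omega)).trans (h _ hne).reachable
      rwa [Nat.cast_succ, ← add_assoc]
  have hall : ∀ j, H.Reachable (c (k + 1)) (c j) := fun j => by
    simpa using hchain (j - (k + 1)).val (j - (k + 1)).isLt
  exact (hall i).symm.trans (hall j)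

theorem cycle_edge_ne (hl : 3 ≤ l) (hinj : Function.Injective c) {i j : Fin l} (hij : i ≠ j) :
    s(c i, c (i + 1)) ≠ s(c j, c (j + 1)) := by
  rw [Ne, Sym2.eq_iff, not_or]
  refine ⟨fun h => hij (hinj h.1), fun ⟨h₁, h₂⟩ => ?_⟩
  rw [hinj.eq_iff] at h₁ h₂
  refine Fin.add_natCast_ne_self (m := 2) (by omega) (by omega) i ?_
  push_cast
  linear_combination h₂ - h₁

theorem reachable_deleteEdges_of_cycle {G : SimpleGraph V} (hl : 3 ≤ l)
    (hinj : Function.Injective c) (hadj : ∀ i, G.Adj (c i) (c (i + 1))) (e : Sym2 V)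
    (i j : Fin l) : (G.deleteEdges {e}).Reachable (c i) (c j) := by
  by_cases he : ∃ k, e = s(c k, c (k + 1))
  · obtain ⟨k, rfl⟩ := he
    exact reachable_of_adj_succ_of_ne k (fun i hi => by
      simpa [hadj i] using cycle_edge_ne hl hinj hi) i j
  · rw [not_exists] at he
    exact reachable_of_adj_succ_of_ne 0 (fun i _ => by simpa [hadj i, eq_comm] using he i) i j

end Cycle

section Unicyclic

structure IsUnicyclicCycle (G : SimpleGraph V) {l : ℕ} [NeZero l] (c : Fin l → V) : Prop where
  connected : G.Connected
  card_edgeSet : Nat.card G.edgeSet = Nat.card V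
  three_le : 3 ≤ l
  injective : Function.Injective c
  adj : ∀ i, G.Adj (c i) (c (i + 1))

variable {G : SimpleGraph V} {l : ℕ} [NeZero l] {c : Fin l → V} {a b : V}

/-- Deleting a non-bridge leaves a tree, which cannot contain the cycle `c` unless the deleted
edge was on it. -/
theorem IsUnicyclicCycle.exists_eq_of_not_isBridge [Finite V] (hc : IsUnicyclicCycle G c)
    (hab : G.Adj a b) (hbr : ¬ G.IsBridge s(a, b)) : ∃ i, s(a, b) = s(c i, c (i + 1)) := by
  by_contra! hne
  set H := G.deleteEdges {s(a, b)}
  have hHadj : ∀ i, H.Adj (c i) (c (i + 1)) := fun i => by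
    simpa [H, hc.adj i, eq_comm] using hne i
  have hcard : Nat.card H.edgeSet + 1 = Nat.card V := by
    rw [← hc.card_edgeSet, edgeSet_deleteEdges, Nat.card_coe_set_eq, Nat.card_coe_set_eq,
      Set.ncard_sdiff_singleton_add_one (G.mem_edgeSet.mpr hab)]
  have htree : H.IsTree := isTree_iff_connected_and_card.mpr
    ⟨hc.connected.connected_delete_edge_of_not_isBridge hbr, hcard⟩
  exact isBridge_iff.mp (isAcyclic_iff_forall_adj_isBridge.mp htree.isAcyclic (hHadj 0))
    (reachable_deleteEdges_of_cycle hc.three_le hc.injective hHadj _ 0 (0 + 1))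

end Unicyclic

section Pairs

variable [Fintype V] (G : SimpleGraph V) (x : V)

noncomputable def adjPairs : Finset (V × V) := {p | G.Adj p.1 p.2}

noncomputable def farPairs : Finset (V × V) :=
  {p | G.Adj p.1 p.2 ∧ ¬ (G.deleteEdges {s(p.1, p.2)}).Reachable x p.1}

noncomputable def unseparatedPairs : Finset (V × V) :=
  {p | G.Adj p.1 p.2 ∧ (G.deleteEdges {s(p.1, p.2)}).Reachable x p.1 ∧
    (G.deleteEdges {s(p.1, p.2)}).Reachable x p.2}

theorem sum_degR_mul (f : V → ℝ) : ∑ y, degR G y * f y = ∑ p ∈ adjPairs G, f p.1 := by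
  rw [adjPairs, sum_filter, ← univ_product_univ, sum_product]
  refine sum_congr rfl fun y _ => ?_
  rw [← sum_filter]
  simp only [sum_const, nsmul_eq_mul, degR]

variable {G x}

theorem sum_adjPairs_fst (hG : G.Preconnected) (f : V → ℝ) :
    ∑ p ∈ adjPairs G, f p.1 =
      ∑ p ∈ farPairs G x, (f p.1 + f p.2) + ∑ p ∈ unseparatedPairs G x, f p.1 := by
  have hfar : ∑ p ∈ adjPairs G with ¬ (G.deleteEdges {s(p.1, p.2)}).Reachable x p.1, f p.1
      = ∑ p ∈ farPairs G x, f p.1 := by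
    congr 1; ext p; simp [adjPairs, farPairs]
  have hswap : ∑ p ∈ adjPairs G with (G.deleteEdges {s(p.1, p.2)}).Reachable x p.1 ∧
      ¬ (G.deleteEdges {s(p.1, p.2)}).Reachable x p.2, f p.1 = ∑ p ∈ farPairs G x, f p.2 := by
    refine sum_nbij' Prod.swap Prod.swap (fun p hp => ?_) (fun p hp => ?_) (fun p _ => rfl)
      (fun p _ => rfl) (fun p _ => rfl)
    · simp only [adjPairs, farPairs, mem_filter, mem_univ, true_and, Prod.fst_swap,
        Prod.snd_swap] at hp ⊢
      rw [Sym2.eq_swap]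
      exact ⟨hp.1.symm, hp.2.2⟩
    · simp only [adjPairs, farPairs, mem_filter, mem_univ, true_and, Prod.fst_swap,
        Prod.snd_swap] at hp ⊢
      rw [Sym2.eq_swap]
      exact ⟨hp.1.symm, (reachable_deleteEdges_or hG hp.1 x).resolve_left hp.2, hp.2⟩
  have hsplit₁ := sum_filter_add_sum_filter_not (adjPairs G)
    (fun p => (G.deleteEdges {s(p.1, p.2)}).Reachable x p.1) (fun p => f p.1)
  have hsplit₂ := sum_filter_add_sum_filter_not
    ((adjPairs G).filter fun p => (G.deleteEdges {s(p.1, p.2)}).Reachable x p.1)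
    (fun p => (G.deleteEdges {s(p.1, p.2)}).Reachable x p.2) (fun p => f p.1)
  rw [filter_filter, filter_filter] at hsplit₂
  have hboth : ∑ p ∈ adjPairs G with (G.deleteEdges {s(p.1, p.2)}).Reachable x p.1 ∧
      (G.deleteEdges {s(p.1, p.2)}).Reachable x p.2, f p.1 = ∑ p ∈ unseparatedPairs G x, f p.1 := by
    congr 1; ext p; simp [adjPairs, unseparatedPairs]
  rw [sum_add_distrib, ← hswap, ← hfar, ← hboth]
  linarith

theorem eres_fst_eq_eres_snd_add_one (hG : G.Preconnected) {p : V × V}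
    (hp : p ∈ farPairs G x) : eres G x p.1 = eres G x p.2 + 1 := by
  obtain ⟨a, b⟩ := p
  simp only [farPairs, mem_filter, mem_univ, true_and] at hp
  obtain ⟨hab, hcut⟩ := hp
  refine eres_eq_eres_add_one_of_cut G (A := {w | (G.deleteEdges {s(a, b)}).Reachable x w}) hab
    hcut ((reachable_deleteEdges_or hG hab x).resolve_left hcut) .rfl
    (fun u w huw hu hw => ?_) (hG x b)
  by_cases he : s(u, w) = s(a, b)
  · rcases Sym2.eq_iff.mp he with ⟨rfl, rfl⟩ | ⟨rfl, rfl⟩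
    · exact absurd hu hcut
    · exact ⟨rfl, rfl⟩
  · exact absurd (Reachable.trans hu (Adj.reachable (by simpa [huw] using he))) hw

end Pairs

section UnicyclicPairs

variable [Fintype V] {G : SimpleGraph V} {x : V} {l : ℕ} [NeZero l] {c : Fin l → V}

theorem IsUnicyclicCycle.sum_farPairs_fst (hc : IsUnicyclicCycle G c) (hx : x ∈ Set.range c)
    (g : V → ℝ) : ∑ p ∈ farPairs G x, g p.1 = ∑ w ∈ (univ.image c)ᶜ, g w := by
  obtain ⟨i₀, rfl⟩ := hx
  refine sum_nbij Prod.fst (fun p hp => ?_) (fun p hp q hq hpq => ?_) (fun w hw => ?_)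
    (fun _ _ => rfl)
  · simp only [farPairs, mem_filter, mem_univ, true_and] at hp
    simp only [mem_compl, mem_image, mem_univ, true_and, not_exists]
    rintro j hj
    exact hp.2 (hj ▸ reachable_deleteEdges_of_cycle hc.three_le hc.injective hc.adj _ i₀ j)
  · simp only [farPairs, coe_filter, mem_univ, true_and, Set.mem_ofPred_eq] at hp hq
    exact Prod.ext hpq
      (eq_of_not_reachable_deleteEdges (hc.connected.preconnected _ _) hp.2 (hpq ▸ hq.2))
  · simp only [coe_compl, coe_image, coe_univ, Set.image_univ, Set.mem_compl_iff] at hw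
    obtain ⟨P, hP⟩ := (hc.connected.preconnected (c i₀) w).exists_isPath
    have hnil : ¬ P.Nil := Walk.not_nil_of_ne fun h => hw ⟨i₀, h⟩
    have hadj : G.Adj w P.penultimate := (P.adj_penultimate hnil).symm
    have hpen : (G.deleteEdges {s(w, P.penultimate)}).Reachable (c i₀) P.penultimate :=
      reachable_deleteEdges_of_isPath hP
        (P.fst_mem_support_of_mem_edges (P.mk_penultimate_end_mem_edges hnil)) hadj.ne _
    refine ⟨(w, P.penultimate), ?_, rfl⟩
    simp only [farPairs, coe_filter, mem_univ, true_and, Set.mem_ofPred_eq]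
    refine ⟨hadj, fun hreach => ?_⟩
    obtain ⟨i, hi⟩ := hc.exists_eq_of_not_isBridge hadj
      (not_not.mpr (hreach.symm.trans hpen))
    rcases Sym2.eq_iff.mp hi with ⟨h, -⟩ | ⟨h, -⟩
    exacts [hw ⟨_, h.symm⟩, hw ⟨_, h.symm⟩]

theorem IsUnicyclicCycle.unseparatedPairs_eq (hc : IsUnicyclicCycle G c)
    (hx : x ∈ Set.range c) :
    unseparatedPairs G x =
      univ.image (fun i => (c i, c (i + 1))) ∪ univ.image (fun i => (c (i + 1), c i)) := by
  obtain ⟨i₀, rfl⟩ := hx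
  have hcyc := reachable_deleteEdges_of_cycle hc.three_le hc.injective hc.adj
  ext ⟨a, b⟩
  simp only [unseparatedPairs, mem_filter, mem_univ, true_and, mem_union, mem_image,
    Prod.mk.injEq]
  constructor
  · rintro ⟨hab, ha, hb⟩
    obtain ⟨i, hi⟩ := hc.exists_eq_of_not_isBridge hab (not_not.mpr (ha.symm.trans hb))
    rcases Sym2.eq_iff.mp hi with ⟨rfl, rfl⟩ | ⟨rfl, rfl⟩
    exacts [.inl ⟨i, rfl, rfl⟩, .inr ⟨i, rfl, rfl⟩]
  · rintro (⟨i, rfl, rfl⟩ | ⟨i, rfl, rfl⟩)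
    exacts [⟨hc.adj i, hcyc _ _ _, hcyc _ _ _⟩, ⟨(hc.adj i).symm, hcyc _ _ _, hcyc _ _ _⟩]

theorem IsUnicyclicCycle.sum_unseparatedPairs_fst (hc : IsUnicyclicCycle G c)
    (hx : x ∈ Set.range c) (f : V → ℝ) :
    ∑ p ∈ unseparatedPairs G x, f p.1 = 2 * ∑ i, f (c i) := by
  have hdisj : Disjoint (univ.image fun i => (c i, c (i + 1)))
      (univ.image fun i => (c (i + 1), c i)) := by
    simp only [Finset.disjoint_left, mem_image, mem_univ, true_and, not_exists]
    rintro _ ⟨i, rfl⟩ j hji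
    simp only [Prod.mk.injEq] at hji
    have hij : i = j := by
      by_contra hne
      exact cycle_edge_ne hc.three_le hc.injective hne (by rw [hji.1, hji.2, Sym2.eq_swap])
    subst hij
    exact (hc.adj i).ne hji.2
  rw [hc.unseparatedPairs_eq hx, sum_union hdisj,
    sum_image fun i _ j _ h => hc.injective (Prod.ext_iff.mp h).1,
    sum_image fun i _ j _ h => hc.injective (Prod.ext_iff.mp h).2]
  have hshift : ∑ i, f (c (i + 1)) = ∑ i, f (c i) :=
    Equiv.sum_comp (Equiv.addRight 1) (fun i => f (c i))
  dsimp only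
  rw [hshift, two_mul]

end UnicyclicPairs

/-- If `G` is an `n`-vertex unicyclic graph whose unique cycle
has length `l` and `x` lies on the cycle, then `R^w(x) = 2·R(x) − (n − l)`. -/
theorem Rw_on_cycle [Fintype V] (G : SimpleGraph V) (n l : ℕ) [NeZero l]
    (hn : Fintype.card V = n) (hconn : G.Connected) (huni : esize G = n)
    (hl : 3 ≤ l) (c : Fin l → V) (hinj : Function.Injective c)
    (hadj : ∀ i : Fin l, G.Adj (c i) (c (i + 1)))
    (x : V) (hx : ∃ i, c i = x) :
    Rw G x = 2 * Rres G x - ((n : ℝ) - l) := by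
  have hc : IsUnicyclicCycle G c :=
    ⟨hconn, by rw [← esize, huni, Nat.card_eq_fintype_card, hn], hl, hinj, hadj⟩
  have hcard : ((farPairs G x).card : ℝ) = n - l := by
    have h := hc.sum_farPairs_fst hx fun _ => 1
    have hle : l ≤ n := hn ▸ Fintype.card_fin l ▸ Fintype.card_le_of_injective c hinj
    simp only [sum_const, nsmul_eq_mul, mul_one] at h
    rw [h, card_compl, card_image_of_injective _ hinj, card_univ, Fintype.card_fin, hn,
      Nat.cast_sub hle]
  have hseries : ∀ p ∈ farPairs G x, eres G x p.1 + eres G x p.2 = 2 * eres G x p.1 - 1 :=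
    fun p hp => by rw [eres_fst_eq_eres_snd_add_one hconn.preconnected hp]; ring
  calc Rw G x
      = ∑ p ∈ farPairs G x, (eres G x p.1 + eres G x p.2) + 2 * ∑ i, eres G x (c i) := by
        rw [Rw, sum_degR_mul, sum_adjPairs_fst hconn.preconnected, hc.sum_unseparatedPairs_fst hx]
    _ = 2 * (∑ w ∈ (univ.image c)ᶜ, eres G x w + ∑ i, eres G x (c i)) - (n - l) := by
        rw [sum_congr rfl hseries, sum_sub_distrib, ← mul_sum, hc.sum_farPairs_fst hx, sum_const,
          nsmul_eq_mul, mul_one, hcard]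
        ring
    _ = 2 * Rres G x - (n - l) := by
        rw [Rres, ← sum_add_sum_compl (univ.image c), sum_image fun i _ j _ h => hinj h, add_comm]
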